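/- arXiv:1603.00069 — 3 statements merged into one kernel-verified Lean document; each statement's English description precedes it below -/
import Mathlib

section
/- Suppose for some unit vector v ∈ S^{d-1} ∩ H_x (where H_x is the hyperplane through 0 normal to x ∈ X) the orthogonal projections of X_C^+ \ {x} onto H_x all have strictly positive inner product with v and the projections of X_C^- all have strictly negative inner product with v. Then for every sufficiently small rotation of v off H_x toward the side where x'v' > 0, the resulting direction v' satisfies y'v' > 0 for all y ∈ X_C^+ and y'v' < 0 for all y ∈ X_C^-. (Converse direction of Theorem 1(i): strict separability in the projection implies the hyperplane H_x contains a facet of the cone C.) -/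
open Finset
open scoped Classical

/-!
Tilting `v` by `ε • x` changes `⟪y, v⟫` continuously in `ε`, so every strict sign of `⟪y, v⟫` on
the finitely many `y ≠ x` survives for all small `ε`; for `y = x` itself, `⟪x, v⟫ = 0` and the tilt
contributes `ε ‖x‖² > 0`.
-/

open Filter Topology

section Tilt

variable {E : Type*} [NormedAddCommGroup E] [InnerProductSpace ℝ E]

lemma tendsto_inner_add_smul (x y v : E) :
    Tendsto (fun ε : ℝ => inner ℝ y (v + ε • x)) (𝓝 0) (𝓝 (inner ℝ y v)) := by
  have hcont : Continuous fun ε : ℝ => inner ℝ y (v + ε • x) := by fun_prop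
  simpa using hcont.tendsto 0

lemma eventually_pos_inner_add_smul {x y v : E} (h : 0 < inner ℝ y v) :
    ∀ᶠ ε in 𝓝 (0 : ℝ), 0 < inner ℝ y (v + ε • x) :=
  (tendsto_inner_add_smul x y v).eventually_const_lt h

lemma eventually_inner_add_smul_neg {x y v : E} (h : inner ℝ y v < 0) :
    ∀ᶠ ε in 𝓝 (0 : ℝ), inner ℝ y (v + ε • x) < 0 :=
  (tendsto_inner_add_smul x y v).eventually_lt_const h

lemma inner_add_smul_self_pos {x v : E} (hx : x ≠ 0) (hxv : inner ℝ x v = 0) {ε : ℝ}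
    (hε : 0 < ε) : 0 < inner ℝ x (v + ε • x) := by
  rw [inner_add_right, hxv, real_inner_smul_right, real_inner_self_eq_norm_sq, zero_add]
  exact mul_pos hε (pow_pos (norm_pos_iff.mpr hx) 2)

end Tilt

lemma exists_pos_forall_Ioo_of_eventually_nhdsGT {p : ℝ → Prop} (h : ∀ᶠ ε in 𝓝[>] 0, p ε) :
    ∃ ε₀ > (0 : ℝ), ∀ ε : ℝ, 0 < ε → ε < ε₀ → p ε := by
  obtain ⟨ε₀, hε₀, hsub⟩ := mem_nhdsGT_iff_exists_Ioo_subset.mp h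
  exact ⟨ε₀, hε₀, fun ε h₀ h₁ => hsub ⟨h₀, h₁⟩⟩

theorem stmt10_general {d : ℕ} (P N : Finset (EuclideanSpace ℝ (Fin d)))
    (x v : EuclideanSpace ℝ (Fin d)) (hx0 : x ≠ 0)
    (hvx : (inner ℝ x v : ℝ) = 0)
    (hP : ∀ y ∈ P, y ≠ x → (0 : ℝ) < inner ℝ y v)
    (hN : ∀ y ∈ N, (inner ℝ y v : ℝ) < 0) :
    ∃ ε₀ > (0 : ℝ), ∀ ε : ℝ, 0 < ε → ε < ε₀ →
      (∀ y ∈ P, (0 : ℝ) < inner ℝ y (v + ε • x)) ∧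
      (∀ y ∈ N, (inner ℝ y (v + ε • x) : ℝ) < 0) := by
  have hP' : ∀ y ∈ P, ∀ᶠ ε in 𝓝[>] (0 : ℝ), (0 : ℝ) < inner ℝ y (v + ε • x) := by
    intro y hy
    by_cases hyx : y = x
    · subst hyx
      exact eventually_nhdsWithin_of_forall fun ε hε => inner_add_smul_self_pos hx0 hvx hε
    · exact (eventually_pos_inner_add_smul (hP y hy hyx)).filter_mono nhdsWithin_le_nhds
  have hN' : ∀ y ∈ N, ∀ᶠ ε in 𝓝[>] (0 : ℝ), (inner ℝ y (v + ε • x) : ℝ) < 0 := fun y hy =>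
    (eventually_inner_add_smul_neg (hN y hy)).filter_mono nhdsWithin_le_nhds
  exact exists_pos_forall_Ioo_of_eventually_nhdsGT
    ((P.eventually_all.mpr hP').and (N.eventually_all.mpr hN'))

theorem stmt10 {d : ℕ} (P N : Finset (EuclideanSpace ℝ (Fin d)))
    (x v : EuclideanSpace ℝ (Fin d)) (hx0 : x ≠ 0) (hxP : x ∈ P)
    (hv : ‖v‖ = 1) (hvx : (inner ℝ x v : ℝ) = 0)
    (hP : ∀ y ∈ P, y ≠ x → (0 : ℝ) < inner ℝ y v)
    (hN : ∀ y ∈ N, (inner ℝ y v : ℝ) < 0) :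
    ∃ ε₀ > (0 : ℝ), ∀ ε : ℝ, 0 < ε → ε < ε₀ →
      (∀ y ∈ P, (0 : ℝ) < inner ℝ y (v + ε • x)) ∧
      (∀ y ∈ N, (inner ℝ y (v + ε • x) : ℝ) < 0) :=
  stmt10_general P N x v hx0 hvx hP hN
end

section
/- Let x ∈ X define a common facet of two neighboring direction cones C and C', with {0} ∪ X in general position. If r moves from the interior of C to the interior of C' through the relative interior of the common facet contained in H_x, then x is the unique point of X whose inner product with r changes sign; all other points of X maintain the sign of their inner product with r. -/
/-! A nonzero value of the continuous function `r ↦ ⟪y, r⟫` keeps its sign near `v`; since `X` is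
finite and general position makes `⟪y, v⟫ ≠ 0` for every `y ≠ x`, one ball around `v` works for all
of them at once, so only `x` can change sign there. -/

open Finset
open scoped Classical

open Filter Topology

theorem eventually_pos_inner_iff {E : Type*} [NormedAddCommGroup E] [InnerProductSpace ℝ E]
    {y v : E} (h : (inner ℝ y v : ℝ) ≠ 0) :
    ∀ᶠ r in 𝓝 v, ((0 : ℝ) < inner ℝ y r ↔ (0 : ℝ) < inner ℝ y v) := by
  have hcont : Tendsto (fun r => (inner ℝ y r : ℝ)) (𝓝 v) (𝓝 (inner ℝ y v)) :=
    (continuous_const.inner continuous_id).continuousAt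
  rcases h.lt_or_gt with hneg | hpos
  · filter_upwards [hcont.eventually_lt_const hneg] with r hr
    exact iff_of_false hr.not_gt hneg.not_gt
  · filter_upwards [hcont.eventually_const_lt hpos] with r hr
    exact iff_of_true hr hpos

theorem stmt11_general {d : ℕ} (X : Finset (EuclideanSpace ℝ (Fin d)))
    (x : EuclideanSpace ℝ (Fin d))
    (v : EuclideanSpace ℝ (Fin d))
    (hgen : ∀ y ∈ X, y ≠ x → (inner ℝ y v : ℝ) ≠ 0) :
    ∃ δ > (0 : ℝ), ∀ r₁ r₂ : EuclideanSpace ℝ (Fin d),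
      ‖r₁ - v‖ < δ → ‖r₂ - v‖ < δ →
      (0 : ℝ) < inner ℝ x r₁ → (inner ℝ x r₂ : ℝ) < 0 →
      ∀ y ∈ X, y ≠ x → ((0 : ℝ) < inner ℝ y r₁ ↔ (0 : ℝ) < inner ℝ y r₂) := by
  have hnear : ∀ᶠ r in 𝓝 v, ∀ y ∈ X.erase x, ((0 : ℝ) < inner ℝ y r ↔ (0 : ℝ) < inner ℝ y v) :=
    (eventually_all_finset _).2 fun y hy =>
      eventually_pos_inner_iff (hgen y (mem_of_mem_erase hy) (ne_of_mem_erase hy))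
  obtain ⟨δ, hδ, hball⟩ := Metric.eventually_nhds_iff.1 hnear
  refine ⟨δ, hδ, fun r₁ r₂ h₁ h₂ _ _ y hy hyx => ?_⟩
  have hyS : y ∈ X.erase x := mem_erase.2 ⟨hyx, hy⟩
  exact (hball (dist_eq_norm r₁ v ▸ h₁) y hyS).trans (hball (dist_eq_norm r₂ v ▸ h₂) y hyS).symm

theorem stmt11 {d : ℕ} (X : Finset (EuclideanSpace ℝ (Fin d)))
    (x : EuclideanSpace ℝ (Fin d)) (hx : x ∈ X)
    (v : EuclideanSpace ℝ (Fin d)) (hv : v ≠ 0)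
    (hxv : (inner ℝ x v : ℝ) = 0)
    (hgen : ∀ y ∈ X, y ≠ x → (inner ℝ y v : ℝ) ≠ 0) :
    ∃ δ > (0 : ℝ), ∀ r₁ r₂ : EuclideanSpace ℝ (Fin d),
      ‖r₁ - v‖ < δ → ‖r₂ - v‖ < δ →
      (0 : ℝ) < inner ℝ x r₁ → (inner ℝ x r₂ : ℝ) < 0 →
      ∀ y ∈ X, y ≠ x → ((0 : ℝ) < inner ℝ y r₁ ↔ (0 : ℝ) < inner ℝ y r₂) :=
  stmt11_general X x v hgen
end

section
/- The empirical Tukey depth of the origin equals the minimum over all direction cones of the cone depth: D(0|X) = min over C ∈ 𝒞(X) of (1/n)·min{#X_C^+, #X_C^-}, where 𝒞(X) is the (finite) set of all direction cones. -/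
open Finset
open scoped Classical

noncomputable def tukeyCount {d n : ℕ} (x : Fin n → EuclideanSpace ℝ (Fin d))
    (z : EuclideanSpace ℝ (Fin d)) : ℕ :=
  sInf {k : ℕ | ∃ r : EuclideanSpace ℝ (Fin d), ‖r‖ = 1 ∧
    k = (Finset.univ.filter fun i => (inner ℝ z r : ℝ) ≤ inner ℝ (x i) r).card}

noncomputable def tukeyDepth {d n : ℕ} (x : Fin n → EuclideanSpace ℝ (Fin d))
    (z : EuclideanSpace ℝ (Fin d)) : ℝ :=
  (tukeyCount x z : ℝ) / n

def InGeneralPosition {d n : ℕ} (x : Fin n → EuclideanSpace ℝ (Fin d)) : Prop :=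
  ∀ s : Finset (EuclideanSpace ℝ (Fin d)),
    ↑s ⊆ insert (0 : EuclideanSpace ℝ (Fin d)) (Set.range x) → s.card ≤ d + 1 →
      AffineIndependent ℝ (fun p : s => (p : EuclideanSpace ℝ (Fin d)))

/-!
For a direction `r` lying on none of the hyperplanes `xᵢ^⊥`, the closed half-spaces `{⟪·, r⟫ ≥ 0}`
and `{⟪·, -r⟫ ≥ 0}` contain exactly the points on the positive and on the negative side of `r`, so
every cone depth is a value of the Tukey count. Conversely, an arbitrary direction `r` can be moved
into the interior of a direction cone without losing any of the strict inequalities `⟪xᵢ, r⟫ < 0`,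
because generic directions are dense and strict inequalities survive small perturbations; the
positive count of the new direction is then at most the closed count of `r`.
-/

open scoped RealInnerProductSpace

section Directions

variable {ι E : Type*} [NormedAddCommGroup E] [InnerProductSpace ℝ E]

lemma dense_setOf_inner_ne_zero {v : E} (hv : v ≠ 0) : Dense {r : E | ⟪v, r⟫ ≠ 0} := by
  have hker : {r : E | ⟪v, r⟫ ≠ 0} = (LinearMap.ker (innerₛₗ ℝ v) : Set E)ᶜ := by
    ext r; simp
  rw [hker, ← interior_eq_empty_iff_dense_compl, ← Set.not_nonempty_iff_eq_empty]
  intro h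
  have hv_ker : v ∈ LinearMap.ker (innerₛₗ ℝ v) := by
    rw [Submodule.eq_top_of_nonempty_interior' _ h]; trivial
  exact hv (inner_self_eq_zero.1 hv_ker)

lemma dense_setOf_forall_inner_ne_zero [Countable ι] [CompleteSpace E] {x : ι → E}
    (hx : ∀ i, x i ≠ 0) : Dense {r : E | ∀ i, ⟪x i, r⟫ ≠ 0} := by
  simp only [Set.ofPred_forall]
  exact dense_iInter_of_isOpen (fun i => isOpen_ne_fun (by fun_prop) continuous_const)
    fun i => dense_setOf_inner_ne_zero (hx i)

lemma exists_forall_inner_ne_zero_card_pos_le [Fintype ι] [CompleteSpace E] {x : ι → E}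
    (hx : ∀ i, x i ≠ 0) (r : E) :
    ∃ r' : E, (∀ i, ⟪x i, r'⟫ ≠ 0) ∧ #{i | 0 < ⟪x i, r'⟫} ≤ #{i | 0 ≤ ⟪x i, r⟫} := by
  have hopen : IsOpen {r' : E | ∀ i ∈ ({i | ⟪x i, r⟫ < 0} : Finset ι), ⟪x i, r'⟫ < 0} := by
    simp only [Set.ofPred_forall]
    exact isOpen_biInter_finset fun i _ => isOpen_lt (by fun_prop) continuous_const
  obtain ⟨r', hr'_gen, hr'_neg⟩ := (dense_setOf_forall_inner_ne_zero hx).exists_mem_open hopen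
    ⟨r, fun i hi => (mem_filter.1 hi).2⟩
  refine ⟨r', hr'_gen, card_le_card fun i => ?_⟩
  simp only [mem_filter, mem_univ, true_and]
  intro hpos
  by_contra hneg
  exact (hr'_neg i (by simpa using hneg)).not_gt hpos

lemma card_inner_smul_nonneg_eq_card_inner_pos [Fintype ι] {x : ι → E} {r : E}
    (hr : ∀ i, ⟪x i, r⟫ ≠ 0) {c : ℝ} (hc : 0 < c) :
    #{i | 0 ≤ ⟪x i, c • r⟫} = #{i | 0 < ⟪x i, r⟫} := by
  congr 1
  refine filter_congr fun i _ => ?_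
  rw [real_inner_smul_right, mul_nonneg_iff_of_pos_left hc, (hr i).symm.le_iff_lt]

lemma exists_norm_eq_one_card_inner_nonneg_eq_min [Fintype ι] {x : ι → E} {r : E}
    (hr : ∀ i, ⟪x i, r⟫ ≠ 0) (hr0 : r ≠ 0) :
    ∃ u : E, ‖u‖ = 1 ∧
      #{i | 0 ≤ ⟪x i, u⟫} = min #{i | 0 < ⟪x i, r⟫} #{i | ⟪x i, r⟫ < 0} := by
  rcases min_cases #{i | 0 < ⟪x i, r⟫} #{i | ⟪x i, r⟫ < 0} with ⟨hmin, -⟩ | ⟨hmin, -⟩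
  · refine ⟨‖r‖⁻¹ • r, norm_smul_inv_norm hr0, ?_⟩
    rw [hmin, card_inner_smul_nonneg_eq_card_inner_pos hr (by positivity)]
  · have hr_neg : ∀ i, ⟪x i, -r⟫ ≠ 0 := by simpa [inner_neg_right] using hr
    refine ⟨‖-r‖⁻¹ • -r, norm_smul_inv_norm (neg_ne_zero.2 hr0), ?_⟩
    rw [hmin, card_inner_smul_nonneg_eq_card_inner_pos hr_neg (by simpa using hr0)]
    simp only [inner_neg_right, neg_pos]

end Directions

section TukeyCount

variable {d n : ℕ} {x : Fin n → EuclideanSpace ℝ (Fin d)}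

lemma tukeyCount_zero_eq :
    tukeyCount x 0 = sInf {k : ℕ | ∃ r : EuclideanSpace ℝ (Fin d), ‖r‖ = 1 ∧
      k = #{i | 0 ≤ ⟪x i, r⟫}} := by
  simp only [tukeyCount, inner_zero_left]

lemma tukeyCount_zero_le_min {r : EuclideanSpace ℝ (Fin d)} (hr : ∀ i, ⟪x i, r⟫ ≠ 0)
    (hr0 : r ≠ 0) : tukeyCount x 0 ≤ min #{i | 0 < ⟪x i, r⟫} #{i | ⟪x i, r⟫ < 0} := by
  obtain ⟨u, hu, hcard⟩ := exists_norm_eq_one_card_inner_nonneg_eq_min hr hr0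
  rw [tukeyCount_zero_eq]
  exact Nat.sInf_le ⟨u, hu, hcard.symm⟩

lemma exists_min_le_tukeyCount_zero (hx : ∀ i, x i ≠ 0) (i₀ : Fin n) :
    ∃ r : EuclideanSpace ℝ (Fin d), (∀ i, ⟪x i, r⟫ ≠ 0) ∧
      min #{i | 0 < ⟪x i, r⟫} #{i | ⟪x i, r⟫ < 0} ≤ tukeyCount x 0 := by
  rw [tukeyCount_zero_eq]
  have hne : {k : ℕ | ∃ r : EuclideanSpace ℝ (Fin d), ‖r‖ = 1 ∧
      k = #{i | 0 ≤ ⟪x i, r⟫}}.Nonempty :=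
    ⟨_, ‖x i₀‖⁻¹ • x i₀, norm_smul_inv_norm (hx i₀), rfl⟩
  obtain ⟨r, -, hk⟩ := Nat.sInf_mem hne
  obtain ⟨r', hr'_gen, hle⟩ := exists_forall_inner_ne_zero_card_pos_le hx r
  exact ⟨r', hr'_gen, (min_le_left _ _).trans (hk ▸ hle)⟩

end TukeyCount

theorem stmt14_general {d n : ℕ} (x : Fin n → EuclideanSpace ℝ (Fin d))
    (hx : ∀ i, x i ≠ 0) :
    tukeyDepth x 0 = sInf {v : ℝ | ∃ r : EuclideanSpace ℝ (Fin d),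
      (∀ i, (inner ℝ (x i) r : ℝ) ≠ 0) ∧
      v = (min ((Finset.univ.filter fun i => (0 : ℝ) < inner ℝ (x i) r).card)
          ((Finset.univ.filter fun i => (inner ℝ (x i) r : ℝ) < 0).card) : ℝ) / n} := by
  rcases n.eq_zero_or_pos with rfl | hn
  · simp [tukeyDepth]
  have hr0 : ∀ r : EuclideanSpace ℝ (Fin d), (∀ i, ⟪x i, r⟫ ≠ 0) → r ≠ 0 :=
    fun r hr h => hr ⟨0, hn⟩ (by simp [h])
  obtain ⟨r₀, hr₀, hle⟩ := exists_min_le_tukeyCount_zero hx ⟨0, hn⟩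
  refine (IsLeast.csInf_eq ?_).symm
  refine ⟨⟨r₀, hr₀, ?_⟩, ?_⟩
  · rw [tukeyDepth, ← le_antisymm hle (tukeyCount_zero_le_min hr₀ (hr0 r₀ hr₀)), Nat.cast_min]
  · rintro v ⟨r, hr, rfl⟩
    rw [tukeyDepth]
    gcongr
    exact_mod_cast tukeyCount_zero_le_min hr (hr0 r hr)

theorem stmt14 {d n : ℕ} (hd : 0 < d) (x : Fin n → EuclideanSpace ℝ (Fin d))
    (hgp : InGeneralPosition x) (hx : ∀ i, x i ≠ 0) :
    tukeyDepth x 0 = sInf {v : ℝ | ∃ r : EuclideanSpace ℝ (Fin d),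
      (∀ i, (inner ℝ (x i) r : ℝ) ≠ 0) ∧
      v = (min ((Finset.univ.filter fun i => (0 : ℝ) < inner ℝ (x i) r).card)
          ((Finset.univ.filter fun i => (inner ℝ (x i) r : ℝ) < 0).card) : ℝ) / n} :=
  stmt14_general x hx
end
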